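/- Fix g > 0 and define g_c = inf{ z > √(1+g²) : there exists Σ > Σ_z with f_z(Σ) = 0 }. Then g_c is well-defined (the set is nonempty), and: (a) for every z > g_c there exists a unique Σ_c = Σ_{c,z} > Σ_z with f_z(Σ_c) = 0; (b) for every 0 < z < g_c, no such Σ_c exists, and f_z(Σ) > 0 for all Σ ≥ Σ_z. -/

import Mathlib

/-- The critical total concentration Σ_z: the unique positive solution of
Σ = 2·e^{−(g+z)Σ/2} (equivalently Σ² = 4·e^{−(g+z)Σ}). -/
noncomputable def sigmaZ (g z : ℝ) : ℝ :=
  sInf {S : ℝ | 0 < S ∧ S = 2 * Real.exp (-((g + z) * S) / 2)}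

/-- f_z(Σ) = (1 + gΣ)·e^{(g+z)Σ} + g² − z². -/
noncomputable def fz (g z S : ℝ) : ℝ :=
  (1 + g * S) * Real.exp ((g + z) * S) + g ^ 2 - z ^ 2

/-- g_c = inf { z > √(1+g²) : ∃ Σ > Σ_z with f_z(Σ) = 0 }. -/
noncomputable def gcConst (g : ℝ) : ℝ :=
  sInf {z : ℝ | Real.sqrt (1 + g ^ 2) < z ∧ ∃ S : ℝ, sigmaZ g z < S ∧ fz g z S = 0}

/-! Put t = 2 / Σ_z. The fixed-point equation for Σ_z says exactly t log t = g + z with t > 1, and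
then f_z(Σ_z) = (t + g)² - z². As f_z is strictly increasing and unbounded on [0, ∞), a root beyond
Σ_z exists iff z > t + g. Comparing t with z - g through the increasing map u ↦ u log u - u on
[1, ∞) turns this into z > g + u₀, where u₀ log u₀ - u₀ = 2g. So the defining set of g_c is the
ray (g + u₀, ∞) and g_c = g + u₀. -/

open Real Set

lemma exists_one_lt_mul_log_eq {c : ℝ} (hc : 0 < c) : ∃ t, 1 < t ∧ t * log t = c := by
  have hle : 1 ≤ exp c := one_le_exp hc.le
  obtain ⟨t, ht, htc⟩ := intermediate_value_Ioc hle continuous_mul_log.continuousOn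
    ⟨by simpa using hc, by simpa using le_mul_of_one_le_left hc.le hle⟩
  exact ⟨t, ht.1, htc⟩

lemma mul_log_sub_self_strictMonoOn : StrictMonoOn (fun x ↦ x * log x - x) (Ici 1) := by
  refine strictMonoOn_of_deriv_pos (convex_Ici 1)
    (continuous_mul_log.sub continuous_id).continuousOn fun x hx ↦ ?_
  rw [interior_Ici] at hx
  rw [((hasDerivAt_mul_log (by linarith [hx.out])).fun_sub (hasDerivAt_id' x)).deriv]
  simpa using log_pos hx

lemma exists_one_lt_mul_log_sub_self_eq {c : ℝ} (hc : 0 ≤ c) :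
    ∃ u, 1 < u ∧ u * log u - u = c := by
  have hle : 1 ≤ exp (c + 2) := one_le_exp (by linarith)
  have hcont : Continuous fun x ↦ x * log x - x := continuous_mul_log.sub continuous_id
  obtain ⟨u, hu, huc⟩ := intermediate_value_Ioc hle hcont.continuousOn
    (show c ∈ Ioc _ _ from ⟨by simp; linarith, by simp only [log_exp]; nlinarith⟩)
  exact ⟨u, hu.1, huc⟩

lemma sigmaZ_eq_two_div {g z t : ℝ} (ht : 1 < t) (htz : t * log t = g + z) :
    sigmaZ g z = 2 / t := by
  have hc : 0 < g + z := htz ▸ mul_log_pos ht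
  set F : ℝ → ℝ := fun S ↦ 2 * exp (-((g + z) * S) / 2)
  have hF : StrictAnti F := fun a b hab ↦ by simp only [F]; gcongr
  have hfix : 2 / t = F (2 / t) := by
    simp only [F]
    rw [← htz, show -(t * log t * (2 / t)) / 2 = -log t by field_simp, exp_neg,
      exp_log (by linarith)]
    ring
  have hset : {S : ℝ | 0 < S ∧ S = F S} = {2 / t} := by
    ext S
    refine ⟨fun ⟨_, hS⟩ ↦ ?_, fun h ↦ h ▸ ⟨by positivity, hfix⟩⟩
    rcases lt_trichotomy S (2 / t) with h | h | h
    · linarith [hF h]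
    · exact h
    · linarith [hF h]
  exact (congrArg sInf hset).trans (csInf_singleton _)

lemma fz_two_div {g z t : ℝ} (ht : 0 < t) (htz : t * log t = g + z) :
    fz g z (2 / t) = (t + g) ^ 2 - z ^ 2 := by
  have hexp : exp ((g + z) * (2 / t)) = t ^ 2 := by
    rw [← htz, show t * log t * (2 / t) = log t + log t by field_simp; ring, exp_add,
      exp_log ht]
    ring
  rw [fz, hexp]
  field_simp
  ring

lemma fz_strictMonoOn {g z : ℝ} (hg : 0 ≤ g) (hc : 0 < g + z) :
    StrictMonoOn (fz g z) (Ici 0) := by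
  intro a ha b hb hab
  have h1 : 1 + g * a ≤ 1 + g * b := by gcongr
  have h2 : exp ((g + z) * a) < exp ((g + z) * b) := by gcongr
  have := mul_lt_mul' h1 h2 (exp_pos _).le (by nlinarith [hb.out])
  simp only [fz]
  linarith

lemma exists_fz_eq_zero_iff {g z s : ℝ} (hg : 0 < g) (hc : 0 < g + z) (hs : 0 ≤ s) :
    (∃ S, s < S ∧ fz g z S = 0) ↔ fz g z s < 0 := by
  have hmono := fz_strictMonoOn hg.le hc
  refine ⟨fun ⟨S, hsS, hS⟩ ↦ hS ▸ hmono hs (hs.trans hsS.le : 0 ≤ S) hsS, fun hneg ↦ ?_⟩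
  have hb : 0 < fz g z (s + z ^ 2 / g) := by
    have hexp : 1 ≤ exp ((g + z) * (s + z ^ 2 / g)) := one_le_exp (by positivity)
    have hgb : g * (s + z ^ 2 / g) = g * s + z ^ 2 := by field_simp
    have := le_mul_of_one_le_right (by positivity : 0 ≤ 1 + g * (s + z ^ 2 / g)) hexp
    rw [fz]
    nlinarith
  have hcont : Continuous (fz g z) := by unfold fz; fun_prop
  obtain ⟨S, hS, hS0⟩ := intermediate_value_Ioo
    (le_add_of_nonneg_right (by positivity) : s ≤ s + z ^ 2 / g) hcont.continuousOn ⟨hneg, hb⟩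
  exact ⟨S, hS.1, hS0⟩

lemma sigmaZ_pos {g z : ℝ} (hc : 0 < g + z) : 0 < sigmaZ g z := by
  obtain ⟨t, ht, htz⟩ := exists_one_lt_mul_log_eq hc
  rw [sigmaZ_eq_two_div ht htz]
  positivity

/- With ψ u = u log u - u one has ψ t - ψ u₀ = z - g - t, so `t - u₀` and `z - g - t` have the
same sign. -/
lemma add_lt_iff_and_lt_add_iff_of_mul_log_eq {g z t u₀ : ℝ} (ht : 1 ≤ t)
    (htz : t * log t = g + z) (hu₀ : 1 ≤ u₀) (hu₀g : u₀ * log u₀ - u₀ = 2 * g) :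
    (t + g < z ↔ g + u₀ < z) ∧ (z < t + g ↔ z < g + u₀) := by
  have hψ := mul_log_sub_self_strictMonoOn
  have hlt : u₀ < t ↔ t + g < z := by
    rw [← hψ.lt_iff_lt hu₀ ht]
    constructor <;> intro h <;> linarith
  have hgt : t < u₀ ↔ z < t + g := by
    rw [← hψ.lt_iff_lt ht hu₀]
    constructor <;> intro h <;> linarith
  constructor
  · refine ⟨fun h ↦ by linarith [hlt.2 h], fun h ↦ ?_⟩
    by_contra! hle
    linarith [not_lt.1 (mt hlt.1 (not_lt.2 hle))]
  · refine ⟨fun h ↦ by linarith [hgt.2 h], fun h ↦ ?_⟩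
    by_contra! hle
    linarith [not_lt.1 (mt hgt.1 (not_lt.2 hle))]

lemma fz_sigmaZ_neg_iff_and_pos_iff {g z u₀ : ℝ} (hc : 0 < g + z) (hu₀ : 1 ≤ u₀)
    (hu₀g : u₀ * log u₀ - u₀ = 2 * g) :
    (fz g z (sigmaZ g z) < 0 ↔ g + u₀ < z) ∧ (0 < fz g z (sigmaZ g z) ↔ z < g + u₀) := by
  obtain ⟨t, ht, htz⟩ := exists_one_lt_mul_log_eq hc
  have hsum : 0 < t + g + z := by linarith
  have hneg : (t + g) ^ 2 - z ^ 2 < 0 ↔ t + g < z := by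
    constructor <;> intro h <;> nlinarith
  have hpos : 0 < (t + g) ^ 2 - z ^ 2 ↔ z < t + g := by
    constructor <;> intro h <;> nlinarith
  rw [sigmaZ_eq_two_div ht htz, fz_two_div (by linarith) htz, hneg, hpos]
  exact add_lt_iff_and_lt_add_iff_of_mul_log_eq ht.le htz hu₀ hu₀g

/-- Proposition: g_c is well-defined (the defining set is nonempty);
(a) for every z > g_c there is a unique Σ_c > Σ_z with f_z(Σ_c) = 0;
(b) for 0 < z < g_c no such Σ_c exists, and f_z(Σ) > 0 for all Σ ≥ Σ_z. -/
theorem stmt_10 (g : ℝ) (hg : 0 < g) :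
    {z : ℝ | Real.sqrt (1 + g ^ 2) < z ∧ ∃ S : ℝ, sigmaZ g z < S ∧ fz g z S = 0}.Nonempty ∧
    (∀ z : ℝ, gcConst g < z → ∃! S : ℝ, sigmaZ g z < S ∧ fz g z S = 0) ∧
    (∀ z : ℝ, 0 < z → z < gcConst g →
      (¬ ∃ S : ℝ, sigmaZ g z < S ∧ fz g z S = 0) ∧
      ∀ S : ℝ, sigmaZ g z ≤ S → 0 < fz g z S) := by
  obtain ⟨u₀, hu₀, hu₀g⟩ := exists_one_lt_mul_log_sub_self_eq (by positivity : 0 ≤ 2 * g)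
  have hroot (z : ℝ) (hc : 0 < g + z) :
      (∃ S, sigmaZ g z < S ∧ fz g z S = 0) ↔ g + u₀ < z :=
    (exists_fz_eq_zero_iff hg hc (sigmaZ_pos hc).le).trans
      (fz_sigmaZ_neg_iff_and_pos_iff hc hu₀.le hu₀g).1
  have hsqrt : sqrt (1 + g ^ 2) < g + u₀ := by
    rw [sqrt_lt' (by positivity)]
    nlinarith
  have hset : {z : ℝ | sqrt (1 + g ^ 2) < z ∧ ∃ S, sigmaZ g z < S ∧ fz g z S = 0}
      = Ioi (g + u₀) := by
    ext z
    refine ⟨fun ⟨hz, hS⟩ ↦ (hroot z ?_).1 hS, fun hz ↦ ⟨hsqrt.trans hz, (hroot z ?_).2 hz⟩⟩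
    · linarith [sqrt_nonneg (1 + g ^ 2)]
    · linarith [hz.out]
  have hgc : gcConst g = g + u₀ := by rw [gcConst, hset, csInf_Ioi]
  refine ⟨hset ▸ nonempty_Ioi, fun z hz ↦ ?_, fun z hz hzc ↦ ?_⟩
  · have hc : 0 < g + z := by linarith
    obtain ⟨S, hS⟩ := (hroot z hc).2 (hgc ▸ hz)
    have hσ := (sigmaZ_pos hc).le
    refine ⟨S, hS, fun S' hS' ↦ (fz_strictMonoOn hg.le hc).injOn
      (hσ.trans hS'.1.le : 0 ≤ S') (hσ.trans hS.1.le : 0 ≤ S) (hS'.2.trans hS.2.symm)⟩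
  · have hc : 0 < g + z := by linarith
    have hσ := sigmaZ_pos hc
    have hpos : ∀ S, sigmaZ g z ≤ S → 0 < fz g z S := fun S hS ↦
      ((fz_sigmaZ_neg_iff_and_pos_iff hc hu₀.le hu₀g).2.2 (hgc ▸ hzc)).trans_le
        ((fz_strictMonoOn hg.le hc).monotoneOn hσ.le (hσ.le.trans hS : 0 ≤ S) hS)
    exact ⟨fun ⟨S, hS, h0⟩ ↦ (hpos S hS.le).ne' h0, hpos⟩
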